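/- Let s be a finite sequence of Reeb chords of the torus algebra. Then every maximal chain of reduction steps starting from s terminates, and all maximal chains terminate at the same reduced sequence, called the reduction of s. Consequently, the relation of composable-equivalence on finite sequences of Reeb chords (having equal reductions) is a well-defined equivalence relation. -/

import Mathlib

/-! Reeb chords of the torus algebra. -/
inductive Chord : Type
  | r1 | r2 | r3 | r12 | r23 | r123
deriving DecidableEq

open Chord

/-- The partial product of two Reeb chords of the torus algebra: it is `some c` exactly when
the product of the two chords is the nonzero basis element `c`, and `none` when the product
is zero in the torus algebra.  The composable pairs are exactly
`(ρ₁,ρ₂) ↦ ρ₁₂`, `(ρ₂,ρ₃) ↦ ρ₂₃`, `(ρ₁,ρ₂₃) ↦ ρ₁₂₃`, `(ρ₁₂,ρ₃) ↦ ρ₁₂₃`. -/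
def mul? : Chord → Chord → Option Chord
  | r1, r2 => some r12
  | r2, r3 => some r23
  | r1, r23 => some r123
  | r12, r3 => some r123
  | _, _ => none

/-- A reduction step on a finite sequence of Reeb chords: replace an adjacent composable
pair by its product. -/
inductive Step : List Chord → List Chord → Prop
  | mk (pre post : List Chord) (a b c : Chord) (hab : mul? a b = some c) :
      Step (pre ++ a :: b :: post) (pre ++ c :: post)

/-- A sequence is reduced if no reduction step applies to it. -/
def Reduced (s : List Chord) : Prop := ∀ t, ¬ Step s t

/-- Insert a chord at the head of a (reduced) list, composing as long as possible. -/
def insertC : Chord → List Chord → List Chord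
  | a, [] => [a]
  | a, b :: t =>
    match mul? a b with
    | some c => insertC c t
    | none => a :: b :: t

/-- Canonical reduction. -/
def reduceL : List Chord → List Chord
  | [] => []
  | a :: s => insertC a (reduceL s)

lemma insertC_mul : ∀ (t : List Chord) (a b c : Chord), mul? a b = some c →
    insertC a (insertC b t) = insertC c t := by
  intro t
  induction t with
  | nil =>
    intro a b c h
    cases a <;> cases b <;> simp [mul?] at h <;> subst h <;> rfl
  | cons x t ih =>
    intro a b c h
    cases a <;> cases b <;> simp [mul?] at h <;> subst h <;> cases x <;>
      simp [insertC, mul?] <;> exact ih _ _ _ rfl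

lemma reduceL_step : ∀ (pre post : List Chord) (a b c : Chord), mul? a b = some c →
    reduceL (pre ++ a :: b :: post) = reduceL (pre ++ c :: post) := by
  intro pre
  induction pre with
  | nil => intro post a b c h; simpa [reduceL] using insertC_mul (reduceL post) a b c h
  | cons x pre ih =>
    intro post a b c h
    simp only [List.cons_append, reduceL]
    exact congrArg _ (ih post a b c h)

lemma reduceL_eq_of_step {s t : List Chord} (h : Step s t) : reduceL s = reduceL t := by
  rcases h with ⟨pre, post, a, b, c, hab⟩
  exact reduceL_step pre post a b c hab

lemma reduceL_eq_of_rtg {s t : List Chord} (h : Relation.ReflTransGen Step s t) :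
    reduceL s = reduceL t := by
  induction h with
  | refl => rfl
  | tail _ h ih => exact ih.trans (reduceL_eq_of_step h)

lemma step_cons {s t : List Chord} (a : Chord) (h : Step s t) : Step (a :: s) (a :: t) := by
  rcases h with ⟨pre, post, x, y, c, hxy⟩
  exact Step.mk (a :: pre) post x y c hxy

lemma rtg_cons {s t : List Chord} (a : Chord) (h : Relation.ReflTransGen Step s t) :
    Relation.ReflTransGen Step (a :: s) (a :: t) :=
  Relation.ReflTransGen.lift (fun l => a :: l) (fun _ _ => step_cons a) s t h

lemma rtg_insertC (a : Chord) : ∀ t : List Chord,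
    Relation.ReflTransGen Step (a :: t) (insertC a t) := by
  intro t
  induction t generalizing a with
  | nil => exact .refl
  | cons b t ih =>
    cases h : mul? a b with
    | none => simp only [insertC, h]; exact .refl
    | some c =>
      simp only [insertC, h]
      exact .trans (.single (Step.mk [] t a b c h)) (ih c)

lemma rtg_reduceL : ∀ s : List Chord, Relation.ReflTransGen Step s (reduceL s) := by
  intro s
  induction s with
  | nil => exact .refl
  | cons a s ih => exact .trans (rtg_cons a ih) (rtg_insertC a (reduceL s))

lemma step_inv {s t : List Chord} (h : Step s t) :
    ∃ pre post a b c, mul? a b = some c ∧ s = pre ++ a :: b :: post ∧ t = pre ++ c :: post := by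
  rcases h with ⟨pre, post, a, b, c, hab⟩
  exact ⟨pre, post, a, b, c, hab, rfl, rfl⟩

lemma reduced_head {a b : Chord} {t : List Chord} (h : Reduced (a :: b :: t)) :
    mul? a b = none := by
  cases hm : mul? a b with
  | none => rfl
  | some c => exact absurd (Step.mk [] t a b c hm) (h (c :: t))

lemma reduced_tail {a : Chord} {s : List Chord} (h : Reduced (a :: s)) : Reduced s := by
  intro t ht
  exact h (a :: t) (step_cons a ht)

lemma reduceL_of_reduced : ∀ {s : List Chord}, Reduced s → reduceL s = s := by
  intro s
  induction s with
  | nil => intro _; rfl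
  | cons a s ih =>
    intro h
    have hs := ih (reduced_tail h)
    simp only [reduceL, hs]
    cases s with
    | nil => rfl
    | cons b t => simp [insertC, reduced_head h]

lemma reduced_reduceL (s : List Chord) : Reduced (reduceL s) := by
  induction s with
  | nil =>
    intro t ht
    obtain ⟨pre, post, x, y, c, hxy, hs, -⟩ := step_inv ht
    simp [reduceL] at hs
  | cons a s ih =>
    simp only [reduceL]
    -- show insertC preserves reducedness
    generalize hr : reduceL s = r at ih
    clear hr s
    induction r generalizing a with
    | nil =>
      intro t ht
      obtain ⟨pre, post, x, y, c, hxy, hs, -⟩ := step_inv ht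
      rcases pre with _ | ⟨p, pre⟩ <;> simp [insertC] at hs
    | cons b t iht =>
      cases h : mul? a b with
      | some c =>
        simp only [insertC, h]
        exact iht c (reduced_tail ih)
      | none =>
        simp only [insertC, h]
        intro u hu
        obtain ⟨pre, post, x, y, e, hxy, hs, -⟩ := step_inv hu
        cases pre with
        | nil =>
          simp only [List.nil_append, List.cons.injEq] at hs
          obtain ⟨rfl, rfl, -⟩ := hs
          simp [h] at hxy
        | cons p pre =>
          simp only [List.cons_append, List.cons.injEq] at hs
          obtain ⟨rfl, h2⟩ := hs
          exact ih (pre ++ e :: post) (h2 ▸ Step.mk pre post x y e hxy)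

lemma step_length {s t : List Chord} (h : Step s t) : t.length < s.length := by
  rcases h with ⟨pre, post, a, b, c, hab⟩
  simp [List.length_append]

/-- Every maximal chain of reduction steps starting from a sequence of Reeb chords
terminates (there is no infinite chain of reduction steps), a reduced sequence is always
reached, and all maximal chains terminate at the same reduced sequence (the *reduction*).
Consequently, composable-equivalence (having equal reductions, equivalently being joinable
to a common reduced sequence) is an equivalence relation on finite sequences of Reeb
chords. -/
theorem reduction_terminates_unique_and_equivalence :
    (∀ s : List Chord, ¬ ∃ f : ℕ → List Chord, f 0 = s ∧ ∀ k, Step (f k) (f (k + 1))) ∧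
    (∀ s : List Chord, ∃ r, Reduced r ∧ Relation.ReflTransGen Step s r) ∧
    (∀ s r r' : List Chord, Reduced r → Reduced r' →
        Relation.ReflTransGen Step s r → Relation.ReflTransGen Step s r' → r = r') ∧
    Equivalence (fun s t : List Chord =>
      ∃ r : List Chord, Reduced r ∧ Relation.ReflTransGen Step s r ∧
        Relation.ReflTransGen Step t r) := by
  have uniq : ∀ s r : List Chord, Reduced r → Relation.ReflTransGen Step s r →
      r = reduceL s := by
    intro s r hr hsr
    rw [← reduceL_of_reduced hr, reduceL_eq_of_rtg hsr]
  refine ⟨?_, ?_, ?_, ?_⟩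
  · rintro s ⟨f, -, hf⟩
    have : ∀ k, (f k).length + k ≤ (f 0).length := by
      intro k
      induction k with
      | zero => simp
      | succ k ih =>
        have := step_length (hf k)
        omega
    have := this ((f 0).length + 1)
    omega
  · intro s
    exact ⟨reduceL s, reduced_reduceL s, rtg_reduceL s⟩
  · intro s r r' hr hr' hsr hsr'
    rw [uniq s r hr hsr, uniq s r' hr' hsr']
  · constructor
    · intro s; exact ⟨reduceL s, reduced_reduceL s, rtg_reduceL s, rtg_reduceL s⟩
    · rintro s t ⟨r, hr, h1, h2⟩; exact ⟨r, hr, h2, h1⟩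
    · rintro s t u ⟨r, hr, h1, h2⟩ ⟨r', hr', h3, h4⟩
      have : r = r' := by rw [uniq t r hr h2, uniq t r' hr' h3]
      exact ⟨r, hr, h1, this ▸ h4⟩
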